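/- With I the ideal generated by the t-coefficients of the series Q_{s,r,w} and I' the ideal generated by the t-coefficients of the series Q'_{s,r,w} = (d^w x_s(t)/dt^w) · x_r(t) (same index ranges), for all integers n, k ≥ 0 and m ∈ ℤ one has dim (S/I')_{n,k,m} ≥ dim (S/I)_{n,k,m}, where (·)_{n,k,m} denotes the graded component of total x-degree n, q-degree k and weight m. -/

import Mathlib

/-!
Give the variable `x_j^{(i)}` the auxiliary weight `j²`. As `j ↦ j²` is strictly convex,
`u² + (r + s - u)² < s² + r²` for `s < u < r`, so the leading form of each coefficient of
`Q_{s,r,w}` for this weight is `(-1)^s` times the same coefficient of `Q'_{s,r,w}`. Hence, in every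
tri-degree `d`, `I' ∩ S_d` lies in the span of the leading forms of `I ∩ S_d`. Passing to leading
forms along a finite filtration cannot increase dimension, so `dim (I' ∩ S_d) ≤ dim (I ∩ S_d)`,
and `dim (S/K)_d = dim S_d - dim (K ∩ S_d)` gives the claim.
-/

open scoped BigOperators

/-- The homogeneous coordinate ring: polynomial ring in the variables `x_j^{(i)}`. -/
abbrev ArcRing (l : ℕ) := MvPolynomial (Fin (l + 1) × ℕ) ℂ

/-- The series `x_j(t) = Σ_{i ≥ 0} x_j^{(i)} t^i`. -/
noncomputable def xSeries (l : ℕ) (j : Fin (l + 1)) : PowerSeries (ArcRing l) :=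
  PowerSeries.mk fun i => MvPolynomial.X (j, i)

/-- The formal derivative `d/dt` of a formal power series. -/
noncomputable def tDeriv {R : Type*} [CommRing R] (f : PowerSeries R) : PowerSeries R :=
  PowerSeries.mk fun n => ((n + 1 : ℕ) : R) * PowerSeries.coeff (n + 1) f

/-- The series `Q_{s,r,w} = Σ_{u=s}^{r-1} (-1)^u C(r-s-1, u-s) (d^w x_u(t)/dt^w) x_{r+s-u}(t)`. -/
noncomputable def Qseries (l s r w : ℕ) (hr : r ≤ l) : PowerSeries (ArcRing l) :=
  ∑ u ∈ Finset.Icc s (r - 1),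
    if h : s ≤ u ∧ u < r then
      ((-1 : ℂ) ^ u * ((r - s - 1).choose (u - s) : ℂ)) •
        (tDeriv^[w] (xSeries l ⟨u, by omega⟩) * xSeries l ⟨r + s - u, by omega⟩)
    else 0

/-- The series `Q'_{s,r,w} = (d^w x_s(t)/dt^w) · x_r(t)`. -/
noncomputable def Q'series (l s r w : ℕ) (hs : s ≤ l) (hr : r ≤ l) :
    PowerSeries (ArcRing l) :=
  tDeriv^[w] (xSeries l ⟨s, by omega⟩) * xSeries l ⟨r, by omega⟩

/-- The ideal `I` generated by all the `t`-coefficients of the series `Q_{s,r,w}`. -/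
noncomputable def QIdeal (l : ℕ) : Ideal (ArcRing l) :=
  Ideal.span {p | ∃ (s r w m : ℕ) (hr : r ≤ l), s + 2 ≤ r ∧ w + s + 2 ≤ r ∧
    p = PowerSeries.coeff m (Qseries l s r w hr)}

/-- The ideal `I'` generated by all the `t`-coefficients of the series `Q'_{s,r,w}`. -/
noncomputable def Q'Ideal (l : ℕ) : Ideal (ArcRing l) :=
  Ideal.span {p | ∃ (s r w m : ℕ) (hs : s ≤ l) (hr : r ≤ l), s + 2 ≤ r ∧ w + s + 2 ≤ r ∧
    p = PowerSeries.coeff m (Q'series l s r w hs hr)}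

/-- The tri-grading on the variables: `deg₁ x_j^{(i)} = 1` (total `x`-degree),
`deg₂ x_j^{(i)} = i` (`q`-degree), `deg₃ x_j^{(i)} = 2j - l` (`sl₂`-weight). -/
def triWeight (l : ℕ) : Fin (l + 1) × ℕ → ℕ × ℕ × ℤ :=
  fun p => (1, p.2, 2 * (p.1 : ℤ) - (l : ℤ))

/-- The graded component of `S ⧸ K` of tri-degree `d`: the image in the quotient of the
span of the monomials of tri-degree `d`. -/
noncomputable def triPiece (l : ℕ) (K : Ideal (ArcRing l)) (d : ℕ × ℕ × ℤ) :
    Submodule ℂ (ArcRing l ⧸ K) :=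
  (MvPolynomial.weightedHomogeneousSubmodule ℂ (triWeight l) d).map
    (Ideal.Quotient.mkₐ ℂ K).toLinearMap

open Module

section LinearAlgebra

variable {K V W : Type*} [Field K] [AddCommGroup V] [Module K V] [AddCommGroup W] [Module K W]

theorem Submodule.finrank_map_add_finrank_inf_ker (f : V →ₗ[K] W) (P : Submodule K V)
    [FiniteDimensional K P] :
    finrank K (P.map f) + finrank K ↥(P ⊓ LinearMap.ker f) = finrank K P := by
  have hker : LinearMap.ker (f.domRestrict P) ≃ₗ[K] ↥(P ⊓ LinearMap.ker f) := by
    have : P.comap P.subtype ⊓ (LinearMap.ker f).comap P.subtype =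
        (LinearMap.ker f).comap P.subtype := by
      rw [Submodule.comap_subtype_self, top_inf_eq]
    rw [LinearMap.ker_domRestrict, ← this, ← Submodule.comap_inf]
    exact Submodule.comapSubtypeEquivOfLe inf_le_left
  rw [← hker.finrank_eq, ← LinearMap.range_domRestrict]
  exact LinearMap.finrank_range_add_finrank_ker _

theorem Submodule.finrank_finsetSup_map_le_of_filtration (F : ℕ → Submodule K V)
    (hF : Monotone F) (φ : ℕ → V →ₗ[K] W) (hφ : ∀ t, F t ≤ LinearMap.ker (φ (t + 1))) (N : ℕ)
    [∀ t, FiniteDimensional K (F t)] :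
    finrank K ↥((Finset.range (N + 1)).sup fun t => (F t).map (φ t)) ≤ finrank K (F N) := by
  induction N with
  | zero =>
    rw [Finset.range_one, Finset.sup_singleton]
    exact Submodule.finrank_map_le (φ 0) (F 0)
  | succ N ih =>
    have hgraded := (F (N + 1)).finrank_map_add_finrank_inf_ker (φ (N + 1))
    have hsub : finrank K (F N) ≤ finrank K ↥(F (N + 1) ⊓ LinearMap.ker (φ (N + 1))) :=
      Submodule.finrank_mono (le_inf (hF N.le_succ) (hφ N))
    rw [Finset.range_add_one, Finset.sup_insert]
    have := Submodule.finrank_add_le_finrank_add_finrank ((F (N + 1)).map (φ (N + 1)))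
      ((Finset.range (N + 1)).sup fun t => (F t).map (φ t))
    omega

end LinearAlgebra

open Finsupp
open scoped Pointwise

namespace MvPolynomial

section WeightFiltration

variable {σ : Type*} (R : Type*) [CommSemiring R] (ρ : σ → ℕ)

noncomputable def weightFiltration (t : ℕ) : Submodule R (MvPolynomial σ R) :=
  restrictSupport R {μ | weight ρ μ ≤ t}

variable {R ρ}

theorem weightFiltration_mono : Monotone (weightFiltration (σ := σ) R ρ) :=
  fun _ _ hst => restrictSupport_mono R fun _ hμ => le_trans hμ hst

theorem IsWeightedHomogeneous.mem_weightFiltration {p : MvPolynomial σ R} {t : ℕ}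
    (hp : IsWeightedHomogeneous ρ p t) : p ∈ weightFiltration R ρ t :=
  fun _ hμ => (hp (mem_support_iff.mp hμ)).le

theorem mul_mem_weightFiltration {p q : MvPolynomial σ R} {a b : ℕ}
    (hp : p ∈ weightFiltration R ρ a) (hq : q ∈ weightFiltration R ρ b) :
    p * q ∈ weightFiltration R ρ (a + b) := by
  have hsub : {μ : σ →₀ ℕ | weight ρ μ ≤ a} + {μ : σ →₀ ℕ | weight ρ μ ≤ b} ⊆
      {μ : σ →₀ ℕ | weight ρ μ ≤ a + b} := by
    rintro _ ⟨μ, hμ, ν, hν, rfl⟩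
    simp only [Set.mem_ofPred_eq, map_add] at hμ hν ⊢
    omega
  refine restrictSupport_mono R hsub ?_
  rw [restrictSupport_add]
  exact Submodule.mul_mem_mul hp hq

theorem weightedHomogeneousComponent_eq_zero_of_mem_weightFiltration {p : MvPolynomial σ R}
    {t u : ℕ} (hp : p ∈ weightFiltration R ρ t) (htu : t < u) :
    weightedHomogeneousComponent ρ u p = 0 :=
  weightedHomogeneousComponent_eq_zero' _ _ fun _ hμ => (lt_of_le_of_lt (hp hμ) htu).ne

theorem restrictSupport_le_weightFiltration {s : Set (σ →₀ ℕ)} (hs : s.Finite) :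
    restrictSupport R s ≤ weightFiltration R ρ (hs.toFinset.sup (weight ρ)) :=
  restrictSupport_mono R fun _ hμ => Finset.le_sup (f := weight ρ) (hs.mem_toFinset.mpr hμ)

end WeightFiltration

section InitialSpan

variable {σ R : Type*} [Field R] (ρ : σ → ℕ)

/-- The span of the leading forms, for the weight `ρ`, of the elements of `U`. -/
noncomputable def initialSpan (U : Submodule R (MvPolynomial σ R)) :
    Submodule R (MvPolynomial σ R) :=
  ⨆ t, (U ⊓ weightFiltration R ρ t).map (weightedHomogeneousComponent ρ t)

variable {ρ} {U : Submodule R (MvPolynomial σ R)}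

theorem weightedHomogeneousComponent_mem_initialSpan {p : MvPolynomial σ R} {t : ℕ}
    (hpU : p ∈ U) (hpt : p ∈ weightFiltration R ρ t) :
    weightedHomogeneousComponent ρ t p ∈ initialSpan ρ U :=
  Submodule.mem_iSup_of_mem t (Submodule.mem_map_of_mem ⟨hpU, hpt⟩)

theorem mul_mem_initialSpan {f g g' : MvPolynomial σ R} {V W t : ℕ}
    (hf : IsWeightedHomogeneous ρ f V) (hg' : IsWeightedHomogeneous ρ g' W)
    (hg : g - g' ∈ weightFiltration R ρ t) (htW : t < W) (hfgU : f * g ∈ U) :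
    f * g' ∈ initialSpan ρ U := by
  have hlower : f * (g - g') ∈ weightFiltration R ρ (V + t) :=
    mul_mem_weightFiltration hf.mem_weightFiltration hg
  have hfg' : IsWeightedHomogeneous ρ (f * g') (V + W) := hf.mul hg'
  have hfg : f * g ∈ weightFiltration R ρ (V + W) := by
    rw [← add_sub_cancel (f * g') (f * g), ← mul_sub]
    exact add_mem hfg'.mem_weightFiltration (weightFiltration_mono (by omega) hlower)
  have hcomp : weightedHomogeneousComponent ρ (V + W) (f * g) = f * g' := by
    rw [← add_sub_cancel g' g, mul_add, map_add, hfg'.weightedHomogeneousComponent_same,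
      weightedHomogeneousComponent_eq_zero_of_mem_weightFiltration hlower (by omega), add_zero]
  exact hcomp ▸ weightedHomogeneousComponent_mem_initialSpan hfgU hfg

theorem initialSpan_eq_finsetSup {N : ℕ} (hUN : U ≤ weightFiltration R ρ N) :
    initialSpan ρ U = (Finset.range (N + 1)).sup fun t =>
      (U ⊓ weightFiltration R ρ t).map (weightedHomogeneousComponent ρ t) := by
  refine le_antisymm (iSup_le fun t => ?_) (Finset.sup_le fun t _ => le_iSup_of_le t le_rfl)
  by_cases ht : t ≤ N
  · exact Finset.le_sup (f := fun t => (U ⊓ weightFiltration R ρ t).map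
      (weightedHomogeneousComponent ρ t)) (Finset.mem_range.mpr (Nat.lt_succ_of_le ht))
  · rintro _ ⟨p, hp, rfl⟩
    rw [weightedHomogeneousComponent_eq_zero_of_mem_weightFiltration (hUN hp.1) (by omega)]
    exact zero_mem _

theorem finrank_le_of_le_initialSpan {s : Set (σ →₀ ℕ)} (hs : s.Finite)
    (hU : U ≤ restrictSupport R s) {V : Submodule R (MvPolynomial σ R)}
    (hV : V ≤ initialSpan ρ U) :
    finrank R V ≤ finrank R U := by
  have : Finite s := hs.to_subtype
  have := Module.Finite.of_basis (basisRestrictSupport R s)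
  have : ∀ t, FiniteDimensional R ↥(U ⊓ weightFiltration R ρ t) :=
    fun t => Submodule.finiteDimensional_of_le (inf_le_left.trans hU)
  have hUN := hU.trans (restrictSupport_le_weightFiltration (ρ := ρ) hs)
  rw [initialSpan_eq_finsetSup hUN] at hV
  have hfilt := Submodule.finrank_finsetSup_map_le_of_filtration
    (fun t => U ⊓ weightFiltration R ρ t)
    (fun a b hab => inf_le_inf_left U (weightFiltration_mono hab))
    (weightedHomogeneousComponent ρ)
    (fun t _ hp => weightedHomogeneousComponent_eq_zero_of_mem_weightFiltration hp.2 t.lt_succ_self)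
    (hs.toFinset.sup (weight ρ))
  rw [inf_eq_left.mpr hUN] at hfilt
  exact (Submodule.finrank_mono hV).trans hfilt

end InitialSpan

end MvPolynomial

theorem Nat.mul_self_add_mul_self_lt_of_lt_of_lt {s u r : ℕ} (hsu : s < u) (hur : u < r) :
    u * u + (r + s - u) * (r + s - u) < s * s + r * r := by
  obtain ⟨a, rfl⟩ : ∃ a, u = s + a + 1 := ⟨u - s - 1, by omega⟩
  obtain ⟨b, rfl⟩ : ∃ b, r = s + a + 1 + b + 1 := ⟨r - s - a - 2, by omega⟩
  rw [show s + a + 1 + b + 1 + s - (s + a + 1) = s + b + 1 by omega]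
  nlinarith

namespace ArcRing

open MvPolynomial

variable {l : ℕ}

theorem tDeriv_eq_derivative {R : Type*} [CommRing R] :
    (tDeriv : PowerSeries R → PowerSeries R) = PowerSeries.derivative R := by
  funext f
  ext n
  simp [tDeriv, PowerSeries.coeff_derivative, mul_comm]

theorem coeff_iterate_tDeriv_xSeries (j : Fin (l + 1)) (w a : ℕ) :
    PowerSeries.coeff a (tDeriv^[w] (xSeries l j)) =
      C ((a + 1).ascFactorial w : ℂ) * X (j, a + w) := by
  rw [tDeriv_eq_derivative, PowerSeries.coeff_iterate_derivative]
  simp [xSeries]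

theorem isWeightedHomogeneous_coeff_iterate_tDeriv_mul {M : Type*} [AddCommMonoid M]
    (ω : Fin (l + 1) × ℕ → M) (u v : Fin (l + 1)) (w m : ℕ) {D : M}
    (hD : ∀ a b, a + b = m + w → ω (u, a) + ω (v, b) = D) :
    IsWeightedHomogeneous ω (PowerSeries.coeff m (tDeriv^[w] (xSeries l u) * xSeries l v)) D := by
  rw [← mem_weightedHomogeneousSubmodule, PowerSeries.coeff_mul]
  refine Submodule.sum_mem _ fun p hp => ?_
  have hD' := hD (p.1 + w) p.2 (by rw [← Finset.HasAntidiagonal.mem_antidiagonal.mp hp]; ring)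
  rw [coeff_iterate_tDeriv_xSeries, mul_assoc, C_mul']
  refine Submodule.smul_mem _ _ ?_
  rw [mem_weightedHomogeneousSubmodule, ← hD']
  exact (isWeightedHomogeneous_X ℂ ω _).mul
    (by simpa [xSeries] using isWeightedHomogeneous_X ℂ ω _)

theorem triWeight_add_triWeight (u v : Fin (l + 1)) (a b : ℕ) :
    triWeight l (u, a) + triWeight l (v, b) = (2, a + b, 2 * ((u + v : ℕ) : ℤ) - 2 * l) := by
  simp only [triWeight, Prod.mk_add_mk, Prod.mk.injEq, true_and]
  push_cast
  ring

/-- The auxiliary weight `x_j^{(i)} ↦ j²`: for it, the term `u = s` strictly dominates all other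
terms of `Q_{s,r,w}`. -/
def indexSqWeight (l : ℕ) : Fin (l + 1) × ℕ → ℕ := fun v => v.1 * v.1

section Generators

variable (s r w m : ℕ) (hs : s ≤ l) (hr : r ≤ l)

theorem isWeightedHomogeneous_coeff_Q'series_triWeight :
    IsWeightedHomogeneous (triWeight l) (PowerSeries.coeff m (Q'series l s r w hs hr))
      (2, m + w, 2 * ((s + r : ℕ) : ℤ) - 2 * l) :=
  isWeightedHomogeneous_coeff_iterate_tDeriv_mul _ _ _ w m fun a b hab => by
    rw [triWeight_add_triWeight, hab]

theorem isWeightedHomogeneous_coeff_Q'series_indexSqWeight :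
    IsWeightedHomogeneous (indexSqWeight l) (PowerSeries.coeff m (Q'series l s r w hs hr))
      (s * s + r * r) :=
  isWeightedHomogeneous_coeff_iterate_tDeriv_mul _ _ _ w m fun _ _ _ => rfl

theorem isWeightedHomogeneous_coeff_Qseries_triWeight :
    IsWeightedHomogeneous (triWeight l) (PowerSeries.coeff m (Qseries l s r w hr))
      (2, m + w, 2 * ((s + r : ℕ) : ℤ) - 2 * l) := by
  rw [← mem_weightedHomogeneousSubmodule, Qseries, map_sum]
  refine Submodule.sum_mem _ fun u _ => ?_
  split_ifs with hu
  · rw [PowerSeries.coeff_smul]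
    refine Submodule.smul_mem _ _ (isWeightedHomogeneous_coeff_iterate_tDeriv_mul _ _ _ w m
      fun a b hab => ?_)
    rw [triWeight_add_triWeight, hab, show u + (r + s - u) = s + r by omega]
  · rw [map_zero]
    exact zero_mem _

theorem coeff_Qseries_sub_mem_weightFiltration (hsr : s + 2 ≤ r) :
    PowerSeries.coeff m (Qseries l s r w hr) -
        (-1 : ℂ) ^ s • PowerSeries.coeff m (Q'series l s r w hs hr) ∈
      weightFiltration ℂ (indexSqWeight l) (s * s + r * r - 1) := by
  rw [Qseries, map_sum, ← Finset.insert_Icc_add_one_left_eq_Icc (by omega : s ≤ r - 1),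
    Finset.sum_insert (by simp), dif_pos ⟨le_rfl, by omega⟩]
  have hlead : PowerSeries.coeff m (((-1 : ℂ) ^ s * ((r - s - 1).choose (s - s) : ℂ)) •
      (tDeriv^[w] (xSeries l ⟨s, by omega⟩) * xSeries l ⟨r + s - s, by omega⟩)) =
      (-1 : ℂ) ^ s • PowerSeries.coeff m (Q'series l s r w hs hr) := by
    simp [Q'series]
  rw [hlead, add_sub_cancel_left]
  refine Submodule.sum_mem _ fun u hu => ?_
  rw [Finset.mem_Icc] at hu
  rw [dif_pos ⟨by omega, by omega⟩, PowerSeries.coeff_smul]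
  have hterm : IsWeightedHomogeneous (indexSqWeight l)
      (PowerSeries.coeff m (tDeriv^[w] (xSeries l ⟨u, by omega⟩) * xSeries l ⟨r + s - u, by omega⟩))
      (u * u + (r + s - u) * (r + s - u)) :=
    isWeightedHomogeneous_coeff_iterate_tDeriv_mul _ _ _ w m fun _ _ _ => rfl
  have := Nat.mul_self_add_mul_self_lt_of_lt_of_lt (s := s) (u := u) (r := r) hu.1 (by omega)
  exact Submodule.smul_mem _ _ (weightFiltration_mono (by omega) hterm.mem_weightFiltration)

end Generators

theorem weight_triWeight_fst (μ : Fin (l + 1) × ℕ →₀ ℕ) :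
    (weight (triWeight l) μ).1 = degree μ := by
  simp [weight_apply, Finsupp.sum, Prod.fst_sum, degree_apply, triWeight]

theorem weight_triWeight_snd_fst (μ : Fin (l + 1) × ℕ →₀ ℕ) :
    (weight (triWeight l) μ).2.1 = weight Prod.snd μ := by
  simp [weight_apply, Finsupp.sum, Prod.snd_sum, Prod.fst_sum, triWeight]

theorem finite_setOf_weight_triWeight_eq (d : ℕ × ℕ × ℤ) :
    {μ : Fin (l + 1) × ℕ →₀ ℕ | weight (triWeight l) μ = d}.Finite := by
  set T : Finset (Fin (l + 1) × ℕ) := Finset.univ ×ˢ Finset.range (d.2.1 + 1)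
  refine (Finset.finsuppAntidiag T d.1).finite_toSet.subset fun μ hμ => ?_
  have hsupp : μ.support ⊆ T := fun v hv => by
    have := le_weight_of_ne_zero' Prod.snd (mem_support_iff.mp hv)
    rw [← weight_triWeight_snd_fst, hμ] at this
    simpa [T] using Nat.lt_succ_of_le this
  rw [Finset.mem_coe, Finset.mem_finsuppAntidiag]
  refine ⟨?_, hsupp⟩
  rw [← Finset.sum_subset hsupp fun v _ hv => notMem_support_iff.mp hv, ← degree_apply,
    ← weight_triWeight_fst, hμ]

instance (d : ℕ × ℕ × ℤ) :
    FiniteDimensional ℂ (weightedHomogeneousSubmodule ℂ (triWeight l) d) := by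
  rw [weightedHomogeneousSubmodule_eq_finsupp_supported]
  have := (finite_setOf_weight_triWeight_eq (l := l) d).to_subtype
  exact Module.Finite.of_basis (basisRestrictSupport ℂ _)

theorem finrank_triPiece_add_finrank_inf (K : Ideal (ArcRing l)) (d : ℕ × ℕ × ℤ) :
    finrank ℂ (triPiece l K d) +
        finrank ℂ ↥(weightedHomogeneousSubmodule ℂ (triWeight l) d ⊓ K.restrictScalars ℂ) =
      finrank ℂ (weightedHomogeneousSubmodule ℂ (triWeight l) d) := by
  have hker : LinearMap.ker (Ideal.Quotient.mkₐ ℂ K).toLinearMap = K.restrictScalars ℂ := by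
    ext p
    simp [Ideal.Quotient.eq_zero_iff_mem]
  rw [← hker]
  exact Submodule.finrank_map_add_finrank_inf_ker _ _

section LeadingForms

variable (d : ℕ × ℕ × ℤ)

local notation "𝒮" => weightedHomogeneousSubmodule ℂ (triWeight l) d

theorem monomial_mul_coeff_Q'series_mem_initialSpan {s r w m : ℕ} (hs : s ≤ l) (hr : r ≤ l)
    (hsr : s + 2 ≤ r) (hwsr : w + s + 2 ≤ r) (μ : Fin (l + 1) × ℕ →₀ ℕ) (c : ℂ)
    (hμ : weight (triWeight l) μ + (2, m + w, 2 * ((s + r : ℕ) : ℤ) - 2 * l) = d) :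
    monomial μ c * PowerSeries.coeff m (Q'series l s r w hs hr) ∈
      initialSpan (indexSqWeight l) (𝒮 ⊓ (QIdeal l).restrictScalars ℂ) := by
  set g := PowerSeries.coeff m (Qseries l s r w hr)
  set g' := PowerSeries.coeff m (Q'series l s r w hs hr)
  have hg : monomial μ c * g ∈ 𝒮 ⊓ (QIdeal l).restrictScalars ℂ := by
    refine ⟨(mem_weightedHomogeneousSubmodule _ _ _ _).mpr ?_,
      Ideal.mul_mem_left _ _ (Ideal.subset_span ⟨s, r, w, m, hr, hsr, hwsr, rfl⟩)⟩
    rw [← hμ]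
    exact (isWeightedHomogeneous_monomial _ μ c rfl).mul
      (isWeightedHomogeneous_coeff_Qseries_triWeight s r w m hr)
  have hlead : IsWeightedHomogeneous (indexSqWeight l) ((-1 : ℂ) ^ s • g') (s * s + r * r) := by
    rw [← mem_weightedHomogeneousSubmodule]
    exact Submodule.smul_mem _ _
      (isWeightedHomogeneous_coeff_Q'series_indexSqWeight s r w m hs hr)
  have := mul_mem_initialSpan (isWeightedHomogeneous_monomial _ μ c rfl) hlead
    (coeff_Qseries_sub_mem_weightFiltration s r w m hs hr hsr)
    (Nat.sub_one_lt (by nlinarith)) hg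
  rw [mul_smul_comm] at this
  simpa [smul_smul, ← mul_pow] using Submodule.smul_mem _ ((-1 : ℂ) ^ s) this

theorem weightedHomogeneousComponent_mul_mem_initialSpan_of_mem_Q'Ideal {p : ArcRing l}
    (hp : p ∈ Q'Ideal l) (f : ArcRing l) :
    weightedHomogeneousComponent (triWeight l) d (f * p) ∈
      initialSpan (indexSqWeight l) (𝒮 ⊓ (QIdeal l).restrictScalars ℂ) := by
  induction hp using Submodule.span_induction generalizing f with
  | mem x hx =>
    obtain ⟨s, r, w, m, hs, hr, hsr, hwsr, rfl⟩ := hx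
    rw [f.as_sum, Finset.sum_mul, map_sum]
    refine Submodule.sum_mem _ fun μ _ => ?_
    have hhom := (isWeightedHomogeneous_monomial (triWeight l) μ (f.coeff μ) rfl).mul
      (isWeightedHomogeneous_coeff_Q'series_triWeight s r w m hs hr)
    by_cases hμ : weight (triWeight l) μ + (2, m + w, 2 * ((s + r : ℕ) : ℤ) - 2 * l) = d
    · rw [← hμ, hhom.weightedHomogeneousComponent_same, hμ]
      exact monomial_mul_coeff_Q'series_mem_initialSpan d hs hr hsr hwsr μ _ hμ
    · rw [hhom.weightedHomogeneousComponent_ne _ (Ne.symm hμ)]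
      exact zero_mem _
  | zero => simp
  | add x y _ _ hx hy => simpa [mul_add] using add_mem (hx f) (hy f)
  | smul a x _ hx => simpa [mul_assoc] using hx (f * a)

theorem inf_Q'Ideal_le_initialSpan :
    𝒮 ⊓ (Q'Ideal l).restrictScalars ℂ ≤
      initialSpan (indexSqWeight l) (𝒮 ⊓ (QIdeal l).restrictScalars ℂ) := by
  rintro p ⟨hpd, hpI'⟩
  rw [← ((mem_weightedHomogeneousSubmodule _ _ _ _).mp hpd).weightedHomogeneousComponent_same,
    ← one_mul p]
  exact weightedHomogeneousComponent_mul_mem_initialSpan_of_mem_Q'Ideal d hpI' 1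

end LeadingForms

end ArcRing

open MvPolynomial ArcRing

theorem dim_quotient_Q'Ideal_ge_general (l : ℕ) (n k : ℕ) (m : ℤ) :
    Module.finrank ℂ (triPiece l (QIdeal l) (n, k, m)) ≤
      Module.finrank ℂ (triPiece l (Q'Ideal l) (n, k, m)) := by
  set d : ℕ × ℕ × ℤ := (n, k, m)
  have hQ := finrank_triPiece_add_finrank_inf (QIdeal l) d
  have hQ' := finrank_triPiece_add_finrank_inf (Q'Ideal l) d
  have hinitial := finrank_le_of_le_initialSpan (finite_setOf_weight_triWeight_eq d)
    (inf_le_left.trans (weightedHomogeneousSubmodule_eq_finsupp_supported ℂ _ d).le)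
    (inf_Q'Ideal_le_initialSpan (l := l) d)
  omega

/-- for all `n, k ≥ 0` and `m ∈ ℤ`, the graded component of `S/I'` of
total `x`-degree `n`, `q`-degree `k` and weight `m` has dimension at least that of the
corresponding graded component of `S/I`. -/
theorem dim_quotient_Q'Ideal_ge (l : ℕ) (hl : 1 ≤ l) (n k : ℕ) (m : ℤ) :
    Module.finrank ℂ (triPiece l (QIdeal l) (n, k, m)) ≤
      Module.finrank ℂ (triPiece l (Q'Ideal l) (n, k, m)) :=
  dim_quotient_Q'Ideal_ge_general l n k m
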